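/- arXiv:math/0405146 — 4 statements merged into one kernel-verified Lean document; each statement's English description precedes it below -/
import Mathlib

section
/- In the ring of differential polynomials in one variable u, for any differential polynomial f the Fréchet derivative of its variational derivative is formally self-adjoint (the Helmholtz condition): D_{δf/δu} = Σ_s (∂(δf/δu)/∂u^{(s)}) ∂_x^s satisfies Σ_s (∂(δf/δu)/∂u^{(s)}) ∂_x^s = Σ_s (-∂_x)^s ∘ (∂(δf/δu)/∂u^{(s)}) as operators on differential polynomials. -/
open MvPolynomial Finset

/-- The total derivative `∂_x` on the ring of differential polynomials in one
dependent variable `u`: the derivation sending `u^{(s)}` to `u^{(s+1)}`. -/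
noncomputable def totalDer : MvPolynomial ℕ ℝ → MvPolynomial ℕ ℝ :=
  fun p => MvPolynomial.mkDerivation ℝ (fun s => MvPolynomial.X (s + 1)) p

noncomputable def Dd : Derivation ℝ (MvPolynomial ℕ ℝ) (MvPolynomial ℕ ℝ) :=
  MvPolynomial.mkDerivation ℝ (fun s => MvPolynomial.X (s + 1))

lemma totalDer_eq : totalDer = ⇑Dd := rfl

lemma Dd_X (s : ℕ) : Dd (X s) = X (s+1) := MvPolynomial.mkDerivation_X _ _ _

lemma bracket_Dd_succ (i : ℕ) :
    (⁅(pderiv (i+1) : Derivation ℝ (MvPolynomial ℕ ℝ) (MvPolynomial ℕ ℝ)), Dd⁆ :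
      Derivation ℝ (MvPolynomial ℕ ℝ) (MvPolynomial ℕ ℝ)) = pderiv i := by
  apply MvPolynomial.derivation_ext
  intro k
  rw [Derivation.commutator_apply, Dd_X]
  have h2 : Dd ((pderiv (i+1)) (X k : MvPolynomial ℕ ℝ)) = 0 := by
    rcases eq_or_ne k (i+1) with rfl | h
    · rw [pderiv_X_self]; simp
    · rw [pderiv_X_of_ne h]; simp
  rw [h2, sub_zero]
  rcases eq_or_ne i k with rfl | h
  · rw [pderiv_X_self, pderiv_X_self]
  · rw [pderiv_X_of_ne (by omega : k+1 ≠ i+1), pderiv_X_of_ne (Ne.symm h)]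

lemma bracket_Dd_zero :
    (⁅(pderiv 0 : Derivation ℝ (MvPolynomial ℕ ℝ) (MvPolynomial ℕ ℝ)), Dd⁆ :
      Derivation ℝ (MvPolynomial ℕ ℝ) (MvPolynomial ℕ ℝ)) = 0 := by
  apply MvPolynomial.derivation_ext
  intro k
  rw [Derivation.commutator_apply, Dd_X]
  have h2 : Dd ((pderiv 0) (X k : MvPolynomial ℕ ℝ)) = 0 := by
    rcases eq_or_ne k 0 with rfl | h
    · rw [pderiv_X_self]; simp
    · rw [pderiv_X_of_ne h]; simp
  rw [h2, sub_zero, pderiv_X_of_ne (by omega : k+1 ≠ 0)]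
  simp

lemma pderiv_comm_nat (i j : ℕ) (q : MvPolynomial ℕ ℝ) :
    pderiv i (pderiv j q) = pderiv j (pderiv i q) := by
  have : (⁅(pderiv i : Derivation ℝ (MvPolynomial ℕ ℝ) (MvPolynomial ℕ ℝ)), pderiv j⁆ :
      Derivation ℝ (MvPolynomial ℕ ℝ) (MvPolynomial ℕ ℝ)) = 0 := by
    apply MvPolynomial.derivation_ext
    intro k
    rw [Derivation.commutator_apply]
    have h1 : ∀ a b : ℕ, (pderiv a) ((pderiv b) (X k : MvPolynomial ℕ ℝ)) = 0 := by
      intro a b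
      rcases eq_or_ne k b with rfl | h
      · rw [pderiv_X_self]; simp
      · rw [pderiv_X_of_ne h]; simp
    rw [h1, h1]; simp
  have := congrArg (fun D : Derivation ℝ (MvPolynomial ℕ ℝ) (MvPolynomial ℕ ℝ) => D q) this
  simpa [Derivation.commutator_apply, sub_eq_zero] using this

lemma totalDer_add (a b : MvPolynomial ℕ ℝ) :
    totalDer (a + b) = totalDer a + totalDer b := Dd.map_add a b

lemma totalDer_smul (c : ℝ) (a : MvPolynomial ℕ ℝ) :
    totalDer (c • a) = c • totalDer a := Dd.map_smul c a

lemma totalDer_zero : totalDer (0 : MvPolynomial ℕ ℝ) = 0 := Dd.map_zero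

lemma totalDer_mul (a b : MvPolynomial ℕ ℝ) :
    totalDer (a * b) = totalDer a * b + a * totalDer b := by
  show Dd (a * b) = _
  rw [Dd.leibniz]
  simp only [smul_eq_mul]
  rw [totalDer_eq]
  ring

lemma iter_add (s : ℕ) (a b : MvPolynomial ℕ ℝ) :
    totalDer^[s] (a + b) = totalDer^[s] a + totalDer^[s] b := by
  induction s generalizing a b with
  | zero => rfl
  | succ n ih =>
    rw [Function.iterate_succ_apply, Function.iterate_succ_apply,
      Function.iterate_succ_apply, totalDer_add, ih]

lemma iter_smul (s : ℕ) (c : ℝ) (a : MvPolynomial ℕ ℝ) :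
    totalDer^[s] (c • a) = c • totalDer^[s] a := by
  induction s generalizing a with
  | zero => rfl
  | succ n ih =>
    rw [Function.iterate_succ_apply, Function.iterate_succ_apply, totalDer_smul, ih]

lemma iter_zero (s : ℕ) : totalDer^[s] (0 : MvPolynomial ℕ ℝ) = 0 := by
  induction s with
  | zero => rfl
  | succ n ih => rw [Function.iterate_succ_apply, totalDer_zero, ih]

lemma iter_sum {ι : Type*} (s : ℕ) (t : Finset ι) (F : ι → MvPolynomial ℕ ℝ) :
    totalDer^[s] (∑ i ∈ t, F i) = ∑ i ∈ t, totalDer^[s] (F i) := by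
  classical
  induction t using Finset.induction with
  | empty => simp [iter_zero]
  | insert _ _ h ih => rw [Finset.sum_insert h, iter_add, ih, Finset.sum_insert h]

/-- `pderiv` with an integer index, zero for negative indices. -/
noncomputable def pdZ (n : ℤ) (q : MvPolynomial ℕ ℝ) : MvPolynomial ℕ ℝ :=
  if 0 ≤ n then pderiv n.toNat q else 0

lemma pdZ_coe (n : ℕ) (q : MvPolynomial ℕ ℝ) : pdZ n q = pderiv n q := by
  simp [pdZ]

lemma pdZ_coe_sub (p j : ℕ) (q : MvPolynomial ℕ ℝ) :
    pdZ ((p : ℤ) - j) q = if j ≤ p then pderiv (p - j) q else 0 := by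
  rcases le_or_gt j p with h | h
  · rw [if_pos h, pdZ, if_pos (by omega)]
    have : ((p : ℤ) - j).toNat = p - j := by omega
    rw [this]
  · rw [if_neg (by omega), pdZ, if_neg (by omega)]

lemma pdZ_totalDer (n : ℤ) (q : MvPolynomial ℕ ℝ) :
    pdZ n (totalDer q) = totalDer (pdZ n q) + pdZ (n - 1) q := by
  rcases lt_or_ge n 0 with hn | hn
  · rw [pdZ, if_neg (by omega), pdZ, if_neg (by omega), pdZ, if_neg (by omega)]
    rw [totalDer_eq]
    simp
  · obtain ⟨m, rfl⟩ := Int.eq_ofNat_of_zero_le hn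
    cases m with
    | zero =>
      have h := congrArg (fun D : Derivation ℝ (MvPolynomial ℕ ℝ) (MvPolynomial ℕ ℝ) => D q)
        bracket_Dd_zero
      simp only [Derivation.commutator_apply, Derivation.zero_apply] at h
      have h0 : pderiv 0 (Dd q) - Dd (pderiv 0 q) = 0 := h
      rw [sub_eq_zero] at h0
      simp only [pdZ, Int.ofNat_eq_coe]
      norm_num
      rw [totalDer_eq]
      exact h0
    | succ i =>
      have h := congrArg (fun D : Derivation ℝ (MvPolynomial ℕ ℝ) (MvPolynomial ℕ ℝ) => D q)
        (bracket_Dd_succ i)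
      simp only [Derivation.commutator_apply] at h
      have h0 : pderiv (i+1) (Dd q) - Dd (pderiv (i+1) q) = pderiv i q := h
      have hs : pderiv (i+1) (Dd q) = Dd (pderiv (i+1) q) + pderiv i q := by
        rw [← h0]; ring
      simp only [pdZ, Int.ofNat_eq_coe]
      rw [if_pos (by omega), if_pos (by omega), if_pos (by omega)]
      have e1 : (((i+1:ℕ) : ℤ)).toNat = i + 1 := by omega
      have e2 : (((i+1:ℕ) : ℤ) - 1).toNat = i := by omega
      rw [e1, e2, totalDer_eq]
      exact hs

lemma totalDer_sum {ι : Type*} (t : Finset ι) (F : ι → MvPolynomial ℕ ℝ) :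
    totalDer (∑ i ∈ t, F i) = ∑ i ∈ t, totalDer (F i) := by
  rw [totalDer_eq]; exact map_sum Dd.toLinearMap F t

/-- Pascal-recursion helper for binomial-weighted sums. -/

lemma choose_sum_succ {M : Type*} [AddCommGroup M] [Module ℝ M] (s : ℕ) (T : ℕ → M) :
    ∑ j ∈ range (s+2), ((s+1).choose j : ℝ) • T j
      = ∑ j ∈ range (s+1), (s.choose j : ℝ) • T j
        + ∑ j ∈ range (s+1), (s.choose j : ℝ) • T (j+1) := by
  rw [Finset.sum_range_succ' (fun j => ((s+1).choose j : ℝ) • T j)]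
  have h1 : ∀ j, (((s+1).choose (j+1) : ℕ) : ℝ) = (s.choose j : ℝ) + (s.choose (j+1) : ℝ) := by
    intro j
    rw [Nat.choose_succ_succ]
    push_cast; ring
  have h2 : ∑ j ∈ range (s+1), ((s+1).choose (j+1) : ℝ) • T (j+1)
      = ∑ j ∈ range (s+1), ((s.choose j : ℝ) • T (j+1) + (s.choose (j+1) : ℝ) • T (j+1)) := by
    refine Finset.sum_congr rfl fun j _ => ?_
    rw [h1, add_smul]
  rw [h2, Finset.sum_add_distrib]
  have h3 : ∑ j ∈ range (s+1), (s.choose (j+1) : ℝ) • T (j+1)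
      = ∑ j ∈ range (s+1), (s.choose j : ℝ) • T j - ((s.choose 0 : ℝ) • T 0) := by
    have h5 := Finset.sum_range_succ' (fun j => (s.choose j : ℝ) • T j) s
    have h4 : ∑ j ∈ range (s+1), (s.choose (j+1) : ℝ) • T (j+1)
        = ∑ j ∈ range s, (s.choose (j+1) : ℝ) • T (j+1) := by
      rw [Finset.sum_range_succ]
      simp [Nat.choose_succ_self]
    rw [h4]
    exact eq_sub_of_add_eq h5.symm
  rw [h3]
  simp only [Nat.choose_zero_right, Nat.cast_one, one_smul]
  abel

lemma pdZ_iter (s : ℕ) (n : ℤ) (q : MvPolynomial ℕ ℝ) :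
    pdZ n (totalDer^[s] q)
      = ∑ j ∈ range (s+1), (s.choose j : ℝ) • totalDer^[s-j] (pdZ (n - j) q) := by
  induction s generalizing n with
  | zero => simp
  | succ s ih =>
    rw [Function.iterate_succ_apply', pdZ_totalDer, ih n, ih (n-1)]
    rw [totalDer_sum]
    have e1 : ∀ j ∈ range (s+1), totalDer ((s.choose j : ℝ) • totalDer^[s-j] (pdZ (n - j) q))
        = (s.choose j : ℝ) • totalDer^[s+1-j] (pdZ (n - j) q) := by
      intro j hj
      rw [totalDer_smul]
      congr 1
      have : s + 1 - j = (s - j) + 1 := by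
        simp at hj; omega
      rw [this, Function.iterate_succ_apply']
    rw [Finset.sum_congr rfl e1]
    have e2 : ∀ j ∈ range (s+1), (s.choose j : ℝ) • totalDer^[s-j] (pdZ (n - 1 - j) q)
        = (s.choose j : ℝ) • totalDer^[s+1-(j+1)] (pdZ (n - (j+1)) q) := by
      intro j hj
      congr 2
      · omega
      · ring_nf
    rw [Finset.sum_congr rfl e2]
    have e3 : ∀ j ∈ range (s+1), (s.choose j : ℝ) • totalDer^[s+1-(j+1)] (pdZ (n - ((j:ℤ) + 1)) q)
        = (s.choose j : ℝ) • totalDer^[s+1-(j+1)] (pdZ (n - ((j+1 : ℕ) : ℤ)) q) := by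
      intro j hj
      have : ((j:ℤ) + 1) = ((j+1 : ℕ) : ℤ) := by push_cast; ring
      rw [this]
    rw [Finset.sum_congr rfl e3]
    rw [show s + 1 + 1 = s + 2 from rfl,
      choose_sum_succ s (fun j => totalDer^[s+1-j] (pdZ (n - j) q))]

/-- Iterated Leibniz rule for the total derivative. -/

lemma iter_mul (t : ℕ) (a g : MvPolynomial ℕ ℝ) :
    totalDer^[t] (a * g)
      = ∑ i ∈ range (t+1), (t.choose i : ℝ) • (totalDer^[t-i] a * totalDer^[i] g) := by
  induction t generalizing a with
  | zero => simp
  | succ t ih =>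
    rw [Function.iterate_succ_apply', ih, totalDer_sum]
    have e1 : ∀ i ∈ range (t+1),
        totalDer ((t.choose i : ℝ) • (totalDer^[t-i] a * totalDer^[i] g))
        = (t.choose i : ℝ) • (totalDer^[t+1-i] a * totalDer^[i] g)
          + (t.choose i : ℝ) • (totalDer^[t-i] a * totalDer^[i+1] g) := by
      intro i hi
      rw [totalDer_smul, totalDer_mul, smul_add]
      congr 3
      · have : t + 1 - i = (t - i) + 1 := by simp at hi; omega
        rw [this, Function.iterate_succ_apply']
      · rw [Function.iterate_succ_apply']
    rw [Finset.sum_congr rfl e1, Finset.sum_add_distrib]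
    rw [show t + 1 + 1 = t + 2 from rfl,
      choose_sum_succ t (fun i => totalDer^[t+1-i] a * totalDer^[i] g)]
    congr 1
    refine Finset.sum_congr rfl fun i hi => ?_
    rw [Nat.succ_sub_succ]

/-- Core identity: the "flip" of a once-integrated-by-parts expression. -/

lemma core (s t : ℕ) (A g : MvPolynomial ℕ ℝ) :
    ∑ j ∈ range (s+1), ((-1:ℝ)^(s+j) * (s.choose j : ℝ)) •
        totalDer^[t+j] (totalDer^[s-j] A * g)
      = ∑ i ∈ range (t+1), (t.choose i : ℝ) • (totalDer^[t-i] A * totalDer^[s+i] g) := by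
  induction s generalizing t A with
  | zero => simpa using iter_mul t A g
  | succ s ih =>
    have key : ∀ j, ((-1:ℝ)^(s+1+j) * ((s+1).choose j : ℝ)) •
          totalDer^[t+j] (totalDer^[s+1-j] A * g)
        = ((s+1).choose j : ℝ) • (((-1:ℝ)^(s+1+j)) •
          totalDer^[t+j] (totalDer^[s+1-j] A * g)) := by
      intro j; rw [smul_smul, mul_comm]
    rw [Finset.sum_congr rfl fun j _ => key j,
      show s + 1 + 1 = s + 2 from rfl,
      choose_sum_succ s (fun j => ((-1:ℝ)^(s+1+j)) • totalDer^[t+j] (totalDer^[s+1-j] A * g))]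
    -- first sum: = - (ih with A := totalDer A)
    have first : ∑ j ∈ range (s+1), (s.choose j : ℝ) •
          (((-1:ℝ)^(s+1+j)) • totalDer^[t+j] (totalDer^[s+1-j] A * g))
        = - ∑ i ∈ range (t+1), (t.choose i : ℝ) •
            (totalDer^[t-i] (totalDer A) * totalDer^[s+i] g) := by
      rw [← ih t (totalDer A), ← Finset.sum_neg_distrib]
      refine Finset.sum_congr rfl fun j hj => ?_
      rw [smul_smul]
      have h1 : s + 1 - j = (s - j) + 1 := by simp at hj; omega
      rw [h1, Function.iterate_succ_apply]
      have h2 : (-1:ℝ)^(s+1+j) = -((-1:ℝ)^(s+j)) := by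
        rw [show s+1+j = (s+j)+1 by ring, pow_succ]; ring
      rw [h2]
      rw [show (s.choose j : ℝ) * -((-1:ℝ)^(s+j)) = -((-1:ℝ)^(s+j) * (s.choose j : ℝ)) by ring]
      rw [neg_smul]
    -- second sum: = ih with t := t+1
    have second : ∑ j ∈ range (s+1), (s.choose j : ℝ) •
          (((-1:ℝ)^(s+1+(j+1))) • totalDer^[t+(j+1)] (totalDer^[s+1-(j+1)] A * g))
        = ∑ i ∈ range (t+2), ((t+1).choose i : ℝ) •
            (totalDer^[t+1-i] A * totalDer^[s+i] g) := by
      rw [← ih (t+1) A]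
      refine Finset.sum_congr rfl fun j hj => ?_
      rw [smul_smul]
      have e1 : t+(j+1) = (t+1)+j := by omega
      have e2 : s+1-(j+1) = s-j := Nat.succ_sub_succ s j
      rw [e1, e2]
      congr 1
      rw [show s+1+(j+1) = (s+j)+2 by ring, pow_succ, pow_succ]
      ring
    rw [first, second]
    -- now: -Σ C(t,i) (D^{t-i}(DA) * D^{s+i} g) + Σ_{range(t+2)} C(t+1,i) (D^{t+1-i}A * D^{s+i}g)
    --     = Σ_{range(t+1)} C(t,i) (D^{t-i}A * D^{s+1+i} g)
    rw [show t + 1 + 1 = t + 2 from rfl,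
      choose_sum_succ t (fun i => totalDer^[t+1-i] A * totalDer^[s+i] g)]
    have third : ∑ i ∈ range (t+1), (t.choose i : ℝ) • (totalDer^[t+1-i] A * totalDer^[s+i] g)
        = ∑ i ∈ range (t+1), (t.choose i : ℝ) •
            (totalDer^[t-i] (totalDer A) * totalDer^[s+i] g) := by
      refine Finset.sum_congr rfl fun i hi => ?_
      congr 2
      have h1 : t + 1 - i = (t - i) + 1 := by simp at hi; omega
      rw [h1, Function.iterate_succ_apply]
    have fourth : ∑ i ∈ range (t+1), (t.choose i : ℝ) •
          (totalDer^[t+1-(i+1)] A * totalDer^[s+(i+1)] g)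
        = ∑ i ∈ range (t+1), (t.choose i : ℝ) •
            (totalDer^[t-i] A * totalDer^[s+1+i] g) := by
      refine Finset.sum_congr rfl fun i hi => ?_
      have e1 : t+1-(i+1) = t-i := Nat.succ_sub_succ t i
      have e2 : s+(i+1) = s+1+i := by omega
      rw [e1, e2]
    rw [third, fourth]
    abel

/-- The Euler operator `E(f) = ∑_{s<M} (-1)^s ∂_x^s (∂f/∂u^{(s)})` (the sum is finite;
`M` is any bound beyond which the partial derivatives of `f` vanish). -/
noncomputable def eulerOp (M : ℕ) (f : MvPolynomial ℕ ℝ) : MvPolynomial ℕ ℝ :=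
  ∑ s ∈ Finset.range M, ((-1 : ℝ) ^ s) • totalDer^[s] (MvPolynomial.pderiv s f)

lemma reindex_sum (P j : ℕ) (hj : j ≤ P) (h : ℕ → MvPolynomial ℕ ℝ) :
    ∑ p ∈ range P, (if j ≤ p then h (p - j) else 0) = ∑ t ∈ range (P - j), h t := by
  rw [Finset.range_eq_Ico, ← Finset.sum_Ico_consecutive _ (Nat.zero_le j) hj]
  have h1 : ∑ p ∈ Finset.Ico 0 j, (if j ≤ p then h (p - j) else 0) = 0 := by
    apply Finset.sum_eq_zero; intro p hp; simp only [Finset.mem_Ico] at hp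
    rw [if_neg (by omega)]
  rw [h1, zero_add, Finset.sum_Ico_eq_sum_range]
  refine Finset.sum_congr rfl fun t ht => ?_
  rw [if_pos (by omega)]
  congr 1; omega

lemma pd_euler (M : ℕ) (f : MvPolynomial ℕ ℝ) (p : ℕ) :
    pderiv p (eulerOp M f) = ∑ s ∈ range M, ∑ j ∈ range (s+1),
      ((-1:ℝ)^s * (s.choose j : ℝ)) • totalDer^[s-j] (pdZ ((p:ℤ) - j) (pderiv s f)) := by
  rw [eulerOp, map_sum]
  refine Finset.sum_congr rfl fun s hs => ?_
  rw [Derivation.map_smul, ← pdZ_coe p, pdZ_iter, Finset.smul_sum]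
  refine Finset.sum_congr rfl fun j hj => ?_
  rw [smul_smul]

/-- Helmholtz criterion: the Fréchet derivative of an Euler–Lagrange expression is
formally self-adjoint.  If `E(f)` is the variational derivative of `f` (computed with a
bound `M` on the orders occurring in `f`), and `N` bounds the orders occurring in
`E(f)`, then `∑_s (∂E(f)/∂u^{(s)}) ∂_x^s g = ∑_s (-∂_x)^s ((∂E(f)/∂u^{(s)}) · g)`
for every differential polynomial `g`. -/
theorem frechet_derivative_of_euler_self_adjoint (f : MvPolynomial ℕ ℝ) (M N : ℕ)
    (hM : ∀ s, M ≤ s → MvPolynomial.pderiv s f = 0)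
    (hN : ∀ s, N ≤ s → MvPolynomial.pderiv s (eulerOp M f) = 0)
    (g : MvPolynomial ℕ ℝ) :
    ∑ s ∈ Finset.range N, (MvPolynomial.pderiv s (eulerOp M f)) * totalDer^[s] g =
      ∑ s ∈ Finset.range N,
        ((-1 : ℝ) ^ s) • totalDer^[s] ((MvPolynomial.pderiv s (eulerOp M f)) * g) := by
  classical
  set P := N + 2 * M with hPdef
  have hNP : range N ⊆ range P := Finset.range_subset_range.mpr (by omega)
  -- notation
  set F : ℕ → ℕ → MvPolynomial ℕ ℝ := fun s t => pderiv t (pderiv s f) with hF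
  have hFzero : ∀ s t, M ≤ t → F s t = 0 := by
    intro s t ht
    rw [hF]
    show pderiv t (pderiv s f) = 0
    rw [pderiv_comm_nat, hM t ht, map_zero]
  have hFsymm : ∀ s t, F s t = F t s := fun s t => pderiv_comm_nat t s f
  -- step 1: extend both sums to range P
  have extL : ∑ p ∈ range N, pderiv p (eulerOp M f) * totalDer^[p] g
      = ∑ p ∈ range P, pderiv p (eulerOp M f) * totalDer^[p] g := by
    apply Finset.sum_subset hNP
    intro p _ hp
    rw [hN p (by simp only [Finset.mem_range, not_lt] at hp; exact hp), zero_mul]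
  have extR : ∑ p ∈ range N, ((-1:ℝ)^p) • totalDer^[p] (pderiv p (eulerOp M f) * g)
      = ∑ p ∈ range P, ((-1:ℝ)^p) • totalDer^[p] (pderiv p (eulerOp M f) * g) := by
    apply Finset.sum_subset hNP
    intro p _ hp
    rw [hN p (by simp only [Finset.mem_range, not_lt] at hp; exact hp), zero_mul,
      iter_zero, smul_zero]
  rw [extL, extR]
  -- normal form of LHS
  have L1 : ∑ p ∈ range P, pderiv p (eulerOp M f) * totalDer^[p] g
      = ∑ s ∈ range M, ∑ t ∈ range M, ∑ j ∈ range (s+1),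
          ((-1:ℝ)^s * (s.choose j : ℝ)) • (totalDer^[s-j] (F s t) * totalDer^[t+j] g) := by
    have e1 : ∀ p ∈ range P, pderiv p (eulerOp M f) * totalDer^[p] g
        = ∑ s ∈ range M, ∑ j ∈ range (s+1), (if j ≤ p then
            ((-1:ℝ)^s * (s.choose j : ℝ)) • (totalDer^[s-j] (F s (p-j)) * totalDer^[(p-j)+j] g)
          else 0) := by
      intro p _
      rw [pd_euler, Finset.sum_mul]
      refine Finset.sum_congr rfl fun s _ => ?_
      rw [Finset.sum_mul]
      refine Finset.sum_congr rfl fun j _ => ?_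
      rw [smul_mul_assoc, pdZ_coe_sub]
      by_cases h : j ≤ p
      · rw [if_pos h, if_pos h]
        have : p - j + j = p := by omega
        rw [this]
      · rw [if_neg h, if_neg h, iter_zero, zero_mul, smul_zero]
    rw [Finset.sum_congr rfl e1, Finset.sum_comm]
    refine Finset.sum_congr rfl fun s hs => ?_
    rw [Finset.sum_comm]
    have e2 : ∀ j ∈ range (s+1), ∑ p ∈ range P, (if j ≤ p then
          ((-1:ℝ)^s * (s.choose j : ℝ)) • (totalDer^[s-j] (F s (p-j)) * totalDer^[(p-j)+j] g)
        else 0)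
        = ∑ t ∈ range M,
          ((-1:ℝ)^s * (s.choose j : ℝ)) • (totalDer^[s-j] (F s t) * totalDer^[t+j] g) := by
      intro j hj
      simp only [Finset.mem_range] at hs hj
      rw [reindex_sum P j (by omega)
        (fun t => ((-1:ℝ)^s * (s.choose j : ℝ)) • (totalDer^[s-j] (F s t) * totalDer^[t+j] g))]
      refine (Finset.sum_subset (Finset.range_subset_range.mpr (by omega)) fun t _ ht => ?_).symm
      rw [hFzero s t (by simp only [Finset.mem_range, not_lt] at ht; exact ht),
        iter_zero, zero_mul, smul_zero]
    rw [Finset.sum_congr rfl e2, Finset.sum_comm]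
  -- normal form of RHS
  have R1 : ∑ p ∈ range P, ((-1:ℝ)^p) • totalDer^[p] (pderiv p (eulerOp M f) * g)
      = ∑ s ∈ range M, ∑ t ∈ range M, ∑ j ∈ range (s+1),
          ((-1:ℝ)^(t+j) * ((-1:ℝ)^s * (s.choose j : ℝ))) •
            totalDer^[t+j] (totalDer^[s-j] (F s t) * g) := by
    have e1 : ∀ p ∈ range P, ((-1:ℝ)^p) • totalDer^[p] (pderiv p (eulerOp M f) * g)
        = ∑ s ∈ range M, ∑ j ∈ range (s+1), (if j ≤ p then
            ((-1:ℝ)^((p-j)+j) * ((-1:ℝ)^s * (s.choose j : ℝ))) •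
              totalDer^[(p-j)+j] (totalDer^[s-j] (F s (p-j)) * g)
          else 0) := by
      intro p _
      rw [pd_euler, Finset.sum_mul, iter_sum, Finset.smul_sum]
      refine Finset.sum_congr rfl fun s _ => ?_
      rw [Finset.sum_mul, iter_sum, Finset.smul_sum]
      refine Finset.sum_congr rfl fun j _ => ?_
      rw [smul_mul_assoc, iter_smul, smul_smul, pdZ_coe_sub]
      by_cases h : j ≤ p
      · rw [if_pos h, if_pos h]
        have : p - j + j = p := by omega
        rw [this]
      · rw [if_neg h, if_neg h, iter_zero, zero_mul, iter_zero, smul_zero]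
    rw [Finset.sum_congr rfl e1, Finset.sum_comm]
    refine Finset.sum_congr rfl fun s hs => ?_
    rw [Finset.sum_comm]
    have e2 : ∀ j ∈ range (s+1), ∑ p ∈ range P, (if j ≤ p then
          ((-1:ℝ)^((p-j)+j) * ((-1:ℝ)^s * (s.choose j : ℝ))) •
            totalDer^[(p-j)+j] (totalDer^[s-j] (F s (p-j)) * g)
        else 0)
        = ∑ t ∈ range M, ((-1:ℝ)^(t+j) * ((-1:ℝ)^s * (s.choose j : ℝ))) •
            totalDer^[t+j] (totalDer^[s-j] (F s t) * g) := by
      intro j hj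
      simp only [Finset.mem_range] at hs hj
      rw [reindex_sum P j (by omega)
        (fun t => ((-1:ℝ)^(t+j) * ((-1:ℝ)^s * (s.choose j : ℝ))) •
          totalDer^[t+j] (totalDer^[s-j] (F s t) * g))]
      refine (Finset.sum_subset (Finset.range_subset_range.mpr (by omega)) fun t _ ht => ?_).symm
      rw [hFzero s t (by simp only [Finset.mem_range, not_lt] at ht; exact ht),
        iter_zero, zero_mul, iter_zero, smul_zero]
    rw [Finset.sum_congr rfl e2, Finset.sum_comm]
  rw [L1, R1]
  -- apply core to the RHS and symmetry of F
  have R2 : ∀ s ∈ range M, ∀ t ∈ range M,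
      ∑ j ∈ range (s+1), ((-1:ℝ)^(t+j) * ((-1:ℝ)^s * (s.choose j : ℝ))) •
        totalDer^[t+j] (totalDer^[s-j] (F s t) * g)
      = ((-1:ℝ)^t) • ∑ i ∈ range (t+1), (t.choose i : ℝ) •
          (totalDer^[t-i] (F s t) * totalDer^[s+i] g) := by
    intro s _ t _
    rw [← core s t (F s t) g, Finset.smul_sum]
    refine Finset.sum_congr rfl fun j _ => ?_
    rw [smul_smul]
    congr 1
    rw [show s + j = j + s by ring, show t + j = j + t by ring, pow_add, pow_add]
    ring
  have L2 : ∀ s ∈ range M, ∀ t ∈ range M,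
      ∑ j ∈ range (s+1), ((-1:ℝ)^s * (s.choose j : ℝ)) •
        (totalDer^[s-j] (F s t) * totalDer^[t+j] g)
      = ((-1:ℝ)^s) • ∑ j ∈ range (s+1), (s.choose j : ℝ) •
          (totalDer^[s-j] (F s t) * totalDer^[t+j] g) := by
    intro s _ t _
    rw [Finset.smul_sum]
    refine Finset.sum_congr rfl fun j _ => ?_
    rw [smul_smul]
  calc ∑ s ∈ range M, ∑ t ∈ range M, ∑ j ∈ range (s+1),
          ((-1:ℝ)^s * (s.choose j : ℝ)) • (totalDer^[s-j] (F s t) * totalDer^[t+j] g)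
      = ∑ s ∈ range M, ∑ t ∈ range M, ((-1:ℝ)^s) • ∑ j ∈ range (s+1), (s.choose j : ℝ) •
          (totalDer^[s-j] (F s t) * totalDer^[t+j] g) := by
        refine Finset.sum_congr rfl fun s hs => Finset.sum_congr rfl fun t ht => L2 s hs t ht
    _ = ∑ t ∈ range M, ∑ s ∈ range M, ((-1:ℝ)^s) • ∑ j ∈ range (s+1), (s.choose j : ℝ) •
          (totalDer^[s-j] (F s t) * totalDer^[t+j] g) := Finset.sum_comm
    _ = ∑ s ∈ range M, ∑ t ∈ range M, ((-1:ℝ)^t) • ∑ i ∈ range (t+1), (t.choose i : ℝ) •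
          (totalDer^[t-i] (F s t) * totalDer^[s+i] g) := by
        refine Finset.sum_congr rfl fun t ht => Finset.sum_congr rfl fun s hs => ?_
        rw [hFsymm t s]
    _ = ∑ s ∈ range M, ∑ t ∈ range M, ∑ j ∈ range (s+1),
          ((-1:ℝ)^(t+j) * ((-1:ℝ)^s * (s.choose j : ℝ))) •
            totalDer^[t+j] (totalDer^[s-j] (F s t) * g) := by
        refine Finset.sum_congr rfl fun s hs => Finset.sum_congr rfl fun t ht => ?_
        rw [R2 s hs t ht]
end

section
/- Let d₁, d₂ be anticommuting differentials (d₁²=d₂²=0, d₁d₂=-d₂d₁) on a graded Lie algebra of local multivectors arising from a compatible bihamiltonian pair, and let X₁,...,X_N be vector fields satisfying d₁d₂X_m = (1/2)Σ_{i=1}^{m-1}[d₁X_i, d₁X_{m-i}] for m = 1,...,N. Define Q = (1/2)Σ_{i=1}^N [d₁X_i, d₁X_{N+1-i}]. Then d₁Q = 0 and d₂Q = 0. -/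
/-!
Write `Y i = d₁ X i`. Since `[ω₁, ω₁] = 0` and `[ω₁, ω₂] = 0`, Jacobi gives `d₁² = 0` and
`d₁ d₂ = -d₂ d₁`, and `d₁`, `d₂` act on brackets of bivectors by the Leibniz rule. Hence
`d₁ Q = 0` because `d₁ Y i = 0`. By the symmetry `i ↔ N + 1 - i` of `Q`,
`d₂ Q = -∑ [d₂ Y i, Y (N + 1 - i)]`, and the recursion turns `d₂ Y i = -d₁ d₂ X i` into brackets of
the `Y`'s, so that `d₂ Q` is a multiple of `∑ [[Y i, Y j], Y k]` over all `i + j + k = N + 1` with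
positive parts. This sum is invariant under cyclic rotation of `(i, j, k)`, so three times it is
the sum of the Jacobi expressions, which vanish.
-/

open Finset

def positiveTriples (n : ℕ) : Finset (ℕ × ℕ × ℕ) :=
  (Icc 1 n ×ˢ Icc 1 n ×ˢ Icc 1 n).filter fun t => t.1 + t.2.1 + t.2.2 = n

theorem mem_positiveTriples {n : ℕ} {t : ℕ × ℕ × ℕ} :
    t ∈ positiveTriples n ↔ 0 < t.1 ∧ 0 < t.2.1 ∧ 0 < t.2.2 ∧ t.1 + t.2.1 + t.2.2 = n := by
  simp only [positiveTriples, mem_filter, mem_product, mem_Icc]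
  omega

section Sums

variable {M : Type*} [AddCommMonoid M]

theorem sum_positiveTriples_rotate (n : ℕ) (f : ℕ → ℕ → ℕ → M) :
    ∑ t ∈ positiveTriples n, f t.1 t.2.1 t.2.2 = ∑ t ∈ positiveTriples n, f t.2.1 t.2.2 t.1 :=
  sum_nbij' (fun t => (t.2.2, t.1, t.2.1)) (fun t => (t.2.1, t.2.2, t.1))
    (fun _ ht => by simp only [mem_positiveTriples] at ht ⊢; omega)
    (fun _ ht => by simp only [mem_positiveTriples] at ht ⊢; omega)
    (fun _ _ => rfl) (fun _ _ => rfl) (fun _ _ => rfl)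

theorem sum_Icc_sum_Ico_eq_sum_positiveTriples (N : ℕ) (f : ℕ → ℕ → ℕ → M) :
    ∑ i ∈ Icc 1 N, ∑ p ∈ Ico 1 i, f p (i - p) (N + 1 - i) =
      ∑ t ∈ positiveTriples (N + 1), f t.1 t.2.1 t.2.2 := by
  rw [sum_sigma']
  refine sum_nbij' (fun x => (x.2, x.1 - x.2, N + 1 - x.1)) (fun t => ⟨t.1 + t.2.1, t.1⟩)
    ?_ ?_ ?_ ?_ fun _ _ => rfl
  · intro x hx
    simp only [mem_sigma, mem_Icc, mem_Ico] at hx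
    simp only [mem_positiveTriples]
    omega
  · intro t ht
    simp only [mem_positiveTriples] at ht
    simp only [mem_sigma, mem_Icc, mem_Ico]
    omega
  · intro x hx
    simp only [mem_sigma, mem_Icc, mem_Ico] at hx
    exact Sigma.ext (by dsimp only; omega) (heq_of_eq rfl)
  · intro t ht
    simp only [mem_positiveTriples] at ht
    ext <;> simp only <;> omega

theorem sum_Icc_reflect (N : ℕ) (g : ℕ → ℕ → M) :
    ∑ i ∈ Icc 1 N, g (N + 1 - i) i = ∑ i ∈ Icc 1 N, g i (N + 1 - i) :=
  sum_nbij' (fun i => N + 1 - i) (fun i => N + 1 - i)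
    (fun _ hi => by simp only [mem_Icc] at hi ⊢; omega)
    (fun _ hi => by simp only [mem_Icc] at hi ⊢; omega)
    (fun _ hi => by simp only [mem_Icc] at hi; omega)
    (fun _ hi => by simp only [mem_Icc] at hi; omega)
    (fun i hi => by simp only [mem_Icc] at hi; rw [show N + 1 - (N + 1 - i) = i by omega])

theorem sum_positiveTriples_eq_zero_of_cyclic {𝕜 : Type*} [Field 𝕜] [CharZero 𝕜]
    {V : Type*} [AddCommGroup V] [Module 𝕜 V] (n : ℕ) {f : ℕ → ℕ → ℕ → V}
    (hf : ∀ i j k, f i j k + f j k i + f k i j = 0) :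
    ∑ t ∈ positiveTriples n, f t.1 t.2.1 t.2.2 = 0 := by
  set S := ∑ t ∈ positiveTriples n, f t.1 t.2.1 t.2.2
  have hS : (3 : 𝕜) • S = 0 := calc
    (3 : 𝕜) • S = S + S + S := by module
    _ = ∑ t ∈ positiveTriples n, (f t.1 t.2.1 t.2.2 + f t.2.1 t.2.2 t.1 + f t.2.2 t.1 t.2.1) := by
      rw [sum_add_distrib, sum_add_distrib, ← sum_positiveTriples_rotate,
        sum_positiveTriples_rotate n fun i j k => f k i j]
    _ = 0 := sum_eq_zero fun t _ => hf _ _ _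
  exact (smul_eq_zero.mp hS).resolve_left three_ne_zero

end Sums

structure IsGradedLieBracket {𝕜 Λ : Type*} [Field 𝕜] [AddCommGroup Λ] [Module 𝕜 Λ]
    (L : ℕ → Submodule 𝕜 Λ) (B : Λ →ₗ[𝕜] Λ →ₗ[𝕜] Λ) : Prop where
  bracket_mem {k l : ℕ} {a b : Λ} : a ∈ L k → b ∈ L l → B a b ∈ L (k + l - 1)
  bracket_comm {k l : ℕ} {a b : Λ} : a ∈ L k → b ∈ L l → B a b = (-1 : 𝕜) ^ (k * l) • B b a
  jacobi {k l m : ℕ} {a b c : Λ} : a ∈ L k → b ∈ L l → c ∈ L m →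
    (-1 : 𝕜) ^ (k * m) • B (B a b) c + (-1 : 𝕜) ^ (k * l) • B (B b c) a +
      (-1 : 𝕜) ^ (l * m) • B (B c a) b = 0

namespace IsGradedLieBracket

variable {𝕜 Λ : Type*} [Field 𝕜] [AddCommGroup Λ] [Module 𝕜 Λ]
  {L : ℕ → Submodule 𝕜 Λ} {B : Λ →ₗ[𝕜] Λ →ₗ[𝕜] Λ} (hB : IsGradedLieBracket L B)
  {k l : ℕ} {ω ω' a b c x : Λ}

include hB

theorem bracket_mem_succ (hω : ω ∈ L 2) (hx : x ∈ L k) : B ω x ∈ L (k + 1) := by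
  simpa [add_comm] using hB.bracket_mem hω hx

theorem bracket_comm_of_even (ha : a ∈ L k) (hb : b ∈ L l) (h : Even (k * l)) :
    B a b = B b a := by
  rw [hB.bracket_comm ha hb, h.neg_one_pow, one_smul]

theorem bracket_comm_two_left (hω : ω ∈ L 2) (hx : x ∈ L k) : B ω x = B x ω :=
  hB.bracket_comm_of_even hω hx (by simp)

theorem bracket_bracket_anticomm (hω : ω ∈ L 2) (hω' : ω' ∈ L 2) (h : B ω ω' = 0)
    (hx : x ∈ L k) : B ω (B ω' x) = -B ω' (B ω x) := by
  have hJ := hB.jacobi hω hω' hx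
  rw [h, ← hB.bracket_comm_two_left hω (hB.bracket_mem_succ hω' hx),
    ← hB.bracket_comm_two_left hω' (hB.bracket_comm_two_left hω hx ▸ hB.bracket_mem_succ hω hx),
    ← hB.bracket_comm_two_left hω hx] at hJ
  norm_num [pow_mul] at hJ
  exact eq_neg_iff_add_eq_zero.mpr hJ

theorem bracket_bracket_self [CharZero 𝕜] (hω : ω ∈ L 2) (h : B ω ω = 0) (hx : x ∈ L k) :
    B ω (B ω x) = 0 := by
  have h2 : (2 : 𝕜) • B ω (B ω x) = 0 := by
    rw [two_smul]
    exact eq_neg_iff_add_eq_zero.mp (hB.bracket_bracket_anticomm hω hω h hx)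
  exact (smul_eq_zero.mp h2).resolve_left two_ne_zero

theorem leibniz (hω : ω ∈ L 2) (ha : a ∈ L k) (hb : b ∈ L l) :
    B ω (B a b) = -B (B ω a) b - (-1 : 𝕜) ^ k • B a (B ω b) := by
  have hJ := hB.jacobi hω ha hb
  have hsign : (-1 : 𝕜) ^ (k * l) * (-1) ^ ((l + 1) * k) = (-1) ^ k := by
    rw [← pow_add, show k * l + (l + 1) * k = k + 2 * (k * l) by ring, pow_add, pow_mul]
    simp
  rw [← hB.bracket_comm_two_left hω (hB.bracket_mem ha hb),
    ← hB.bracket_comm_two_left hω hb, hB.bracket_comm (hB.bracket_mem_succ hω hb) ha,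
    smul_smul, hsign] at hJ
  simp only [pow_mul, neg_one_sq, one_pow, one_smul] at hJ
  linear_combination (norm := module) hJ

theorem jacobi_two (ha : a ∈ L 2) (hb : b ∈ L 2) (hc : c ∈ L 2) :
    B (B a b) c + B (B b c) a + B (B c a) b = 0 := by
  have hJ := hB.jacobi ha hb hc
  norm_num at hJ
  exact hJ

theorem bracket_sum_Icc_reflect (hω : ω ∈ L 2) (N : ℕ) {Y : ℕ → Λ} (hY : ∀ i, Y i ∈ L 2) :
    B ω (∑ i ∈ Icc 1 N, B (Y i) (Y (N + 1 - i))) =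
      -(2 : 𝕜) • ∑ i ∈ Icc 1 N, B (B ω (Y i)) (Y (N + 1 - i)) := by
  have hterm : ∀ i j, B ω (B (Y i) (Y j)) = -B (B ω (Y i)) (Y j) - B (B ω (Y j)) (Y i) := by
    intro i j
    rw [hB.leibniz hω (hY i) (hY j), neg_one_sq, one_smul,
      hB.bracket_comm_of_even (hY i) (hB.bracket_mem_succ hω (hY j)) (by decide)]
  simp only [map_sum, hterm, sum_sub_distrib, sum_neg_distrib,
    sum_Icc_reflect N fun i j => B (B ω (Y i)) (Y j)]
  module

end IsGradedLieBracket

theorem obstruction_is_closed_general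
    {Λ : Type*} [AddCommGroup Λ] [Module ℝ Λ]
    (L : ℕ → Submodule ℝ Λ) (B : Λ →ₗ[ℝ] Λ →ₗ[ℝ] Λ)
    (hgrade : ∀ k l a b, a ∈ L k → b ∈ L l → B a b ∈ L (k + l - 1))
    (hanti : ∀ k l a b, a ∈ L k → b ∈ L l → B a b = ((-1 : ℝ) ^ (k * l)) • B b a)
    (hjac : ∀ k l m a b c, a ∈ L k → b ∈ L l → c ∈ L m →
      ((-1 : ℝ) ^ (k * m)) • B (B a b) c + ((-1 : ℝ) ^ (k * l)) • B (B b c) a +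
        ((-1 : ℝ) ^ (l * m)) • B (B c a) b = 0)
    (ω₁ ω₂ : Λ) (hω₁ : ω₁ ∈ L 2) (hω₂ : ω₂ ∈ L 2)
    (h11 : B ω₁ ω₁ = 0) (h12 : B ω₁ ω₂ = 0)
    (N : ℕ) (X : ℕ → Λ) (hX : ∀ i, X i ∈ L 1)
    (heq : ∀ m, 1 ≤ m → m ≤ N →
      B ω₁ (B ω₂ (X m)) =
        (1 / 2 : ℝ) • ∑ i ∈ Finset.Ico 1 m, B (B ω₁ (X i)) (B ω₁ (X (m - i)))) :
    B ω₁ ((1 / 2 : ℝ) • ∑ i ∈ Finset.Icc 1 N, B (B ω₁ (X i)) (B ω₁ (X (N + 1 - i)))) = 0 ∧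
    B ω₂ ((1 / 2 : ℝ) • ∑ i ∈ Finset.Icc 1 N, B (B ω₁ (X i)) (B ω₁ (X (N + 1 - i)))) = 0 := by
  have hB : IsGradedLieBracket L B :=
    ⟨hgrade _ _ _ _, hanti _ _ _ _, hjac _ _ _ _ _ _⟩
  set Y : ℕ → Λ := fun i => B ω₁ (X i)
  have hY : ∀ i, Y i ∈ L 2 := fun i => hB.bracket_mem_succ hω₁ (hX i)
  have hd₂Y : ∀ i ∈ Icc 1 N,
      B ω₂ (Y i) = -(1 / 2 : ℝ) • ∑ p ∈ Ico 1 i, B (Y p) (Y (i - p)) := by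
    intro i hi
    rw [mem_Icc] at hi
    rw [neg_eq_iff_eq_neg.mp (hB.bracket_bracket_anticomm hω₁ hω₂ h12 (hX i)).symm,
      heq i hi.1 hi.2, neg_smul]
  have hcyclic : ∑ t ∈ positiveTriples (N + 1), B (B (Y t.1) (Y t.2.1)) (Y t.2.2) = 0 :=
    sum_positiveTriples_eq_zero_of_cyclic (𝕜 := ℝ) _
      fun i j k => hB.jacobi_two (hY i) (hY j) (hY k)
  refine ⟨?_, ?_⟩
  · simp [hB.bracket_sum_Icc_reflect hω₁ N hY, Y, hB.bracket_bracket_self hω₁ h11 (hX _)]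
  · rw [map_smul, hB.bracket_sum_Icc_reflect hω₂ N hY, sum_congr rfl fun i hi => by rw [hd₂Y i hi]]
    simp only [map_smul, map_sum, LinearMap.smul_apply, LinearMap.sum_apply, ← smul_sum,
      sum_Icc_sum_Ico_eq_sum_positiveTriples N fun p q r => B (B (Y p) (Y q)) (Y r), hcyclic,
      smul_zero]

/-- In the graded Lie algebra of local multivectors with compatible Poisson
bivectors `ω₁, ω₂` (so `[ω₁,ω₁] = [ω₂,ω₂] = [ω₁,ω₂] = 0`, with `d_a = [ω_a, ·]`),
if the vector fields `X₁, …, X_N ∈ Λ¹` satisfy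
`d₁d₂X_m = (1/2)∑_{i=1}^{m-1}[d₁X_i, d₁X_{m-i}]` for `m = 1, …, N`, then the
obstruction `Q = (1/2)∑_{i=1}^N [d₁X_i, d₁X_{N+1-i}]` satisfies
`d₁Q = 0` and `d₂Q = 0`. -/
theorem obstruction_is_closed
    {Λ : Type*} [AddCommGroup Λ] [Module ℝ Λ]
    (L : ℕ → Submodule ℝ Λ) (B : Λ →ₗ[ℝ] Λ →ₗ[ℝ] Λ)
    (hgrade : ∀ k l a b, a ∈ L k → b ∈ L l → B a b ∈ L (k + l - 1))
    (hanti : ∀ k l a b, a ∈ L k → b ∈ L l → B a b = ((-1 : ℝ) ^ (k * l)) • B b a)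
    (hjac : ∀ k l m a b c, a ∈ L k → b ∈ L l → c ∈ L m →
      ((-1 : ℝ) ^ (k * m)) • B (B a b) c + ((-1 : ℝ) ^ (k * l)) • B (B b c) a +
        ((-1 : ℝ) ^ (l * m)) • B (B c a) b = 0)
    (ω₁ ω₂ : Λ) (hω₁ : ω₁ ∈ L 2) (hω₂ : ω₂ ∈ L 2)
    (h11 : B ω₁ ω₁ = 0) (h22 : B ω₂ ω₂ = 0) (h12 : B ω₁ ω₂ = 0)
    (N : ℕ) (X : ℕ → Λ) (hX : ∀ i, X i ∈ L 1)
    (heq : ∀ m, 1 ≤ m → m ≤ N →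
      B ω₁ (B ω₂ (X m)) =
        (1 / 2 : ℝ) • ∑ i ∈ Finset.Ico 1 m, B (B ω₁ (X i)) (B ω₁ (X (m - i)))) :
    B ω₁ ((1 / 2 : ℝ) • ∑ i ∈ Finset.Icc 1 N, B (B ω₁ (X i)) (B ω₁ (X (N + 1 - i)))) = 0 ∧
    B ω₂ ((1 / 2 : ℝ) • ∑ i ∈ Finset.Icc 1 N, B (B ω₁ (X i)) (B ω₁ (X (N + 1 - i)))) = 0 :=
  obstruction_is_closed_general L B hgrade hanti hjac ω₁ ω₂ hω₁ hω₂ h11 h12 N X hX heq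
end

section
/- The Camassa–Holm equation (v - (ε²/8)v_xx)_t = v v_x - (ε²/12)v_x v_xx - (ε²/24)v v_xxx has the Lax pair representation: the compatibility condition of ε²φ_xx = (2 - (8v - ε²v_xx)/(2λ))φ and φ_t = (1/3)(λ+v)φ_x - (v_x/6)φ holds identically in λ if and only if u = v - (ε²/8)v_xx evolves by u_t = v v_x - (ε²/12)v_x v_xx - (ε²/24)v v_xxx; i.e., cross-differentiating the two linear equations (∂_t of the first equals ∂_x² applied appropriately to the second) yields exactly the Camassa–Holm equation. -/
/-!
Clearing the denominator `2λ` in the spectral problem and differentiating it once in `x` and once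
in `t`, and differentiating the time evolution twice in `x`, the two Lax equations alone give
the pointwise identity
`(u_t - v v_x + (ε²/12) v_x v_xx + (ε²/24) v v_xxx) φ = (λε²/4) (φ_txx - φ_xxt)`.
As `φ` does not vanish, the compatibility condition forces the Camassa–Holm equation. Conversely,
the compatibility condition is the symmetry of mixed partials (Clairaut), which holds because
`φ_t`, `φ_tx`, `φ_txx` are continuous.
-/

open Filter intervalIntegral Set

theorem hasDerivAt_partial_swap {f g h k : ℝ → ℝ → ℝ}
    (hg : ∀ x t, HasDerivAt (f x) (g x t) t)
    (hh : ∀ x t, HasDerivAt (fun y => g y t) (h x t) x)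
    (hk : ∀ x t, HasDerivAt (fun y => f y t) (k x t) x)
    (hgc : ∀ x, Continuous (g x)) (hhc : Continuous (Function.uncurry h)) (x t : ℝ) :
    HasDerivAt (k x) (h x t) t := by
  have hhc_t : Continuous (h x) := hhc.comp (.prodMk_right x)
  have hdiff : ∀ t', HasDerivAt (fun y => ∫ s in (0 : ℝ)..t', g y s)
      (∫ s in (0 : ℝ)..t', h x s) x := by
    intro t'
    obtain ⟨C, hC⟩ := ((isCompact_closedBall x 1).prod isCompact_uIcc).exists_bound_of_continuousOn
      (hhc.continuousOn (s := Metric.closedBall x 1 ×ˢ uIcc 0 t'))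
    exact (intervalIntegral.hasDerivAt_integral_of_dominated_loc_of_deriv_le (bound := fun _ => C)
      (Metric.closedBall_mem_nhds x one_pos)
      (Eventually.of_forall fun y => (hgc y).aestronglyMeasurable)
      ((hgc x).intervalIntegrable 0 t') hhc_t.aestronglyMeasurable
      (MeasureTheory.ae_of_all _ fun s hs y hy => hC (y, s) ⟨hy, uIoc_subset_uIcc hs⟩)
      intervalIntegrable_const (MeasureTheory.ae_of_all _ fun s _ y _ => hh y s)).2
  -- integrating `g = ∂ₜ f` in `t` and differentiating in `x` expresses `k` as a primitive of `h x`
  have hprim : ∀ t', k x t' = k x 0 + ∫ s in (0 : ℝ)..t', h x s := by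
    intro t'
    have hint : ∀ y, ∫ s in (0 : ℝ)..t', g y s = f y t' - f y 0 := fun y =>
      integral_eq_sub_of_hasDerivAt (fun s _ => hg y s) ((hgc y).intervalIntegrable 0 t')
    have := ((hk x t').sub (hk x 0)).unique ((hdiff t').congr_of_eventuallyEq
      (Eventually.of_forall fun y => (hint y).symm))
    linarith
  rw [show k x = _ from funext hprim]
  exact ((hhc_t.integral_hasStrictDerivAt 0 t).hasDerivAt).const_add _

theorem spectral_relation_deriv {lam eps z V' W' P' Φ' : ℝ} {V W P Φ : ℝ → ℝ}
    (h : ∀ y, 2 * lam * (eps ^ 2 * P y) = (4 * lam - 8 * V y + eps ^ 2 * W y) * Φ y)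
    (hV : HasDerivAt V V' z) (hW : HasDerivAt W W' z) (hP : HasDerivAt P P' z)
    (hΦ : HasDerivAt Φ Φ' z) :
    2 * lam * (eps ^ 2 * P') =
      (-(8 * V') + eps ^ 2 * W') * Φ z + (4 * lam - 8 * V z + eps ^ 2 * W z) * Φ' :=
  ((hP.const_mul _).const_mul _).unique <|
    ((((hV.const_mul 8).const_sub _).add (hW.const_mul _)).mul hΦ).congr_of_eventuallyEq
      (Eventually.of_forall h)

section LaxPair

variable {eps lam : ℝ} {v vx vxx vxxx vt vxxt ph phx phxx phxxx pht phtx phtxx phxxt : ℝ → ℝ → ℝ}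

theorem spectral_relation_cleared (hlam : lam ≠ 0)
    (hE1 : ∀ x t, eps ^ 2 * phxx x t =
      (2 - (8 * v x t - eps ^ 2 * vxx x t) / (2 * lam)) * ph x t) (x t : ℝ) :
    2 * lam * (eps ^ 2 * phxx x t) = (4 * lam - 8 * v x t + eps ^ 2 * vxx x t) * ph x t := by
  rw [hE1]
  field_simp
  ring

theorem phtxx_eq_of_evolution
    (hE2 : ∀ x t, pht x t = (1 / 3) * (lam + v x t) * phx x t - (vx x t / 6) * ph x t)
    (hvx : ∀ x t, HasDerivAt (fun y => v y t) (vx x t) x)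
    (hvxx : ∀ x t, HasDerivAt (fun y => vx y t) (vxx x t) x)
    (hvxxx : ∀ x t, HasDerivAt (fun y => vxx y t) (vxxx x t) x)
    (hphx : ∀ x t, HasDerivAt (fun y => ph y t) (phx x t) x)
    (hphxx : ∀ x t, HasDerivAt (fun y => phx y t) (phxx x t) x)
    (hphxxx : ∀ x t, HasDerivAt (fun y => phxx y t) (phxxx x t) x)
    (hphtx : ∀ x t, HasDerivAt (fun y => pht y t) (phtx x t) x)
    (hphtxx : ∀ x t, HasDerivAt (fun y => phtx y t) (phtxx x t) x) (x t : ℝ) :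
    phtxx x t = 1 / 3 * (vxx x t * phx x t + 2 * vx x t * phxx x t + (lam + v x t) * phxxx x t)
      - (vxxx x t * ph x t + 2 * vxx x t * phx x t + vx x t * phxx x t) / 6 := by
  have hphtx_eq : ∀ y, phtx y t =
      1 / 3 * (vx y t * phx y t + (lam + v y t) * phxx y t)
        - (vxx y t * ph y t + vx y t * phx y t) / 6 := fun y =>
    (hphtx y t).unique <| ((((hvx y t).const_add lam).mul (hphxx y t)).const_mul (1 / 3)).sub
      (((hvxx y t).mul (hphx y t)).div_const 6) |>.congr_of_eventuallyEq
        (Eventually.of_forall fun y' =>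
          (hE2 y' t).trans (by simp only [Pi.sub_apply, Pi.mul_apply]; ring))
  have hderiv := (((((hvxx x t).mul (hphxx x t)).add
    (((hvx x t).const_add lam).mul (hphxxx x t))).const_mul (1 / 3)).sub
      ((((hvxxx x t).mul (hphx x t)).add ((hvxx x t).mul (hphxx x t))).div_const 6))
  rw [(hphtxx x t).unique (hderiv.congr_of_eventuallyEq (Eventually.of_forall hphtx_eq))]
  ring

theorem camassaHolm_residual_mul_eq (hlam : lam ≠ 0)
    (hE1 : ∀ x t, eps ^ 2 * phxx x t =
      (2 - (8 * v x t - eps ^ 2 * vxx x t) / (2 * lam)) * ph x t)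
    (hE2 : ∀ x t, pht x t = (1 / 3) * (lam + v x t) * phx x t - (vx x t / 6) * ph x t)
    (hvx : ∀ x t, HasDerivAt (fun y => v y t) (vx x t) x)
    (hvxx : ∀ x t, HasDerivAt (fun y => vx y t) (vxx x t) x)
    (hvxxx : ∀ x t, HasDerivAt (fun y => vxx y t) (vxxx x t) x)
    (hvt : ∀ x t, HasDerivAt (fun s => v x s) (vt x t) t)
    (hvxxt : ∀ x t, HasDerivAt (fun s => vxx x s) (vxxt x t) t)
    (hphx : ∀ x t, HasDerivAt (fun y => ph y t) (phx x t) x)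
    (hphxx : ∀ x t, HasDerivAt (fun y => phx y t) (phxx x t) x)
    (hphxxx : ∀ x t, HasDerivAt (fun y => phxx y t) (phxxx x t) x)
    (hpht : ∀ x t, HasDerivAt (fun s => ph x s) (pht x t) t)
    (hphtx : ∀ x t, HasDerivAt (fun y => pht y t) (phtx x t) x)
    (hphtxx : ∀ x t, HasDerivAt (fun y => phtx y t) (phtxx x t) x)
    (hphxxt : ∀ x t, HasDerivAt (fun s => phxx x s) (phxxt x t) t) (x t : ℝ) :
    (vt x t - eps ^ 2 / 8 * vxxt x t - (v x t * vx x t - eps ^ 2 / 12 * vx x t * vxx x t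
      - eps ^ 2 / 24 * v x t * vxxx x t)) * ph x t =
      lam * eps ^ 2 / 4 * (phtxx x t - phxxt x t) := by
  have hspec := spectral_relation_cleared hlam hE1
  have hspec_x := spectral_relation_deriv (fun y => hspec y t)
    (hvx x t) (hvxxx x t) (hphxxx x t) (hphx x t)
  have hspec_t := spectral_relation_deriv (hspec x)
    (hvt x t) (hvxxt x t) (hphxxt x t) (hpht x t)
  rw [phtxx_eq_of_evolution hE2 hvx hvxx hvxxx hphx hphxx hphxxx hphtx hphtxx]
  linear_combination (1 / 8 : ℝ) * hspec_t - vx x t / 16 * hspec x t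
    - (lam + v x t) / 24 * hspec_x
    + (lam / 2 - (8 * v x t - eps ^ 2 * vxx x t) / 8) * hE2 x t

end LaxPair

theorem camassa_holm_lax_pair_general (eps lam : ℝ) (hlam : lam ≠ 0)
    (v vx vxx vxxx vt vxxt ph phx phxx phxxx pht phtx phtxx phxxt : ℝ → ℝ → ℝ)
    (hvx : ∀ x t, HasDerivAt (fun y => v y t) (vx x t) x)
    (hvxx : ∀ x t, HasDerivAt (fun y => vx y t) (vxx x t) x)
    (hvxxx : ∀ x t, HasDerivAt (fun y => vxx y t) (vxxx x t) x)
    (hvt : ∀ x t, HasDerivAt (fun s => v x s) (vt x t) t)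
    (hvxxt : ∀ x t, HasDerivAt (fun s => vxx x s) (vxxt x t) t)
    (hphx : ∀ x t, HasDerivAt (fun y => ph y t) (phx x t) x)
    (hphxx : ∀ x t, HasDerivAt (fun y => phx y t) (phxx x t) x)
    (hphxxx : ∀ x t, HasDerivAt (fun y => phxx y t) (phxxx x t) x)
    (hpht : ∀ x t, HasDerivAt (fun s => ph x s) (pht x t) t)
    (hphtx : ∀ x t, HasDerivAt (fun y => pht y t) (phtx x t) x)
    (hphtxx : ∀ x t, HasDerivAt (fun y => phtx y t) (phtxx x t) x)
    (hphxxt : ∀ x t, HasDerivAt (fun s => phxx x s) (phxxt x t) t)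
    (hc4 : Continuous (fun q : ℝ × ℝ => pht q.1 q.2))
    (hc5 : Continuous (fun q : ℝ × ℝ => phtx q.1 q.2))
    (hc6 : Continuous (fun q : ℝ × ℝ => phtxx q.1 q.2))
    (hphne : ∀ x t, ph x t ≠ 0)
    (hE1 : ∀ x t, eps ^ 2 * phxx x t =
      (2 - (8 * v x t - eps ^ 2 * vxx x t) / (2 * lam)) * ph x t)
    (hE2 : ∀ x t, pht x t =
      (1 / 3) * (lam + v x t) * phx x t - (vx x t / 6) * ph x t) :
    (∀ x t, phxxt x t = phtxx x t) ↔
      (∀ x t, vt x t - (eps ^ 2 / 8) * vxxt x t =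
        v x t * vx x t - (eps ^ 2 / 12) * vx x t * vxx x t
          - (eps ^ 2 / 24) * v x t * vxxx x t) := by
  have hphxt : ∀ x t, HasDerivAt (fun s => phx x s) (phtx x t) t :=
    hasDerivAt_partial_swap hpht hphtx hphx (fun x => hc4.comp (.prodMk_right x)) hc5
  have hcompat : ∀ x t, phxxt x t = phtxx x t := fun x t =>
    (hphxxt x t).unique <|
      hasDerivAt_partial_swap hphxt hphtxx hphxx (fun x => hc5.comp (.prodMk_right x)) hc6 x t
  refine ⟨fun hcomp x t => ?_, fun _ => hcompat⟩
  have hres := camassaHolm_residual_mul_eq hlam hE1 hE2 hvx hvxx hvxxx hvt hvxxt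
    hphx hphxx hphxxx hpht hphtx hphtxx hphxxt x t
  rw [hcomp, sub_self, mul_zero, mul_eq_zero, sub_eq_zero] at hres
  exact hres.resolve_right (hphne x t)

/-- Lax pair representation of the Camassa–Holm equation.  Let `v, φ` be smooth
functions of `(x,t)` (given together with their named partial derivatives, all
continuous), `λ ≠ 0` a spectral parameter, `ε` a real constant, and suppose `φ` is
nonvanishing and satisfies the spectral problem
`ε²φ_xx = (2 - (8v - ε²v_xx)/(2λ))φ` and the time evolution
`φ_t = (1/3)(λ+v)φ_x - (v_x/6)φ`.  Then the compatibility condition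
`(φ_xx)_t = (φ_t)_xx` holds identically if and only if `u = v - (ε²/8)v_xx`
evolves by the Camassa–Holm equation
`(v - (ε²/8)v_xx)_t = v v_x - (ε²/12)v_x v_xx - (ε²/24)v v_xxx`. -/
theorem camassa_holm_lax_pair (eps lam : ℝ) (hlam : lam ≠ 0)
    (v vx vxx vxxx vt vxxt ph phx phxx phxxx pht phtx phtxx phxxt : ℝ → ℝ → ℝ)
    (hvx : ∀ x t, HasDerivAt (fun y => v y t) (vx x t) x)
    (hvxx : ∀ x t, HasDerivAt (fun y => vx y t) (vxx x t) x)
    (hvxxx : ∀ x t, HasDerivAt (fun y => vxx y t) (vxxx x t) x)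
    (hvt : ∀ x t, HasDerivAt (fun s => v x s) (vt x t) t)
    (hvxxt : ∀ x t, HasDerivAt (fun s => vxx x s) (vxxt x t) t)
    (hphx : ∀ x t, HasDerivAt (fun y => ph y t) (phx x t) x)
    (hphxx : ∀ x t, HasDerivAt (fun y => phx y t) (phxx x t) x)
    (hphxxx : ∀ x t, HasDerivAt (fun y => phxx y t) (phxxx x t) x)
    (hpht : ∀ x t, HasDerivAt (fun s => ph x s) (pht x t) t)
    (hphtx : ∀ x t, HasDerivAt (fun y => pht y t) (phtx x t) x)
    (hphtxx : ∀ x t, HasDerivAt (fun y => phtx y t) (phtxx x t) x)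
    (hphxxt : ∀ x t, HasDerivAt (fun s => phxx x s) (phxxt x t) t)
    (hc0 : Continuous (fun q : ℝ × ℝ => ph q.1 q.2))
    (hc1 : Continuous (fun q : ℝ × ℝ => phx q.1 q.2))
    (hc2 : Continuous (fun q : ℝ × ℝ => phxx q.1 q.2))
    (hc3 : Continuous (fun q : ℝ × ℝ => phxxx q.1 q.2))
    (hc4 : Continuous (fun q : ℝ × ℝ => pht q.1 q.2))
    (hc5 : Continuous (fun q : ℝ × ℝ => phtx q.1 q.2))
    (hc6 : Continuous (fun q : ℝ × ℝ => phtxx q.1 q.2))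
    (hc7 : Continuous (fun q : ℝ × ℝ => phxxt q.1 q.2))
    (hphne : ∀ x t, ph x t ≠ 0)
    (hE1 : ∀ x t, eps ^ 2 * phxx x t =
      (2 - (8 * v x t - eps ^ 2 * vxx x t) / (2 * lam)) * ph x t)
    (hE2 : ∀ x t, pht x t =
      (1 / 3) * (lam + v x t) * phx x t - (vx x t / 6) * ph x t) :
    (∀ x t, phxxt x t = phtxx x t) ↔
      (∀ x t, vt x t - (eps ^ 2 / 8) * vxxt x t =
        v x t * vx x t - (eps ^ 2 / 12) * vx x t * vxx x t
          - (eps ^ 2 / 24) * v x t * vxxx x t) :=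
  camassa_holm_lax_pair_general eps lam hlam v vx vxx vxxx vt vxxt ph phx phxx phxxx pht phtx phtxx
    phxxt hvx hvxx hvxxx hvt hvxxt hphx hphxx hphxxx hpht hphtx hphtxx hphxxt hc4 hc5 hc6 hphne hE1
    hE2
end

section
/- For smooth functions G = Σᵢ hᵢ(u, uⁱ_x) and H = Σᵢ uⁱhᵢ(u, uⁱ_x), the components of the bivector-derived expression Xⁱ satisfy ∂Xⁱ/∂uⁱ_xx = (3/2)fⁱ uⁱ_x ∂²hᵢ/∂(uⁱ_x)², where Xⁱ = gⁱ∂_x(δI/δuⁱ) + (1/2)(∂_xgⁱ)(δI/δuⁱ) + Σ_α B^{iα}δI/δu^α - fⁱ∂_x(δJ/δuⁱ) - (1/2)(∂_xfⁱ)(δJ/δuⁱ) - Σ_α A^{iα}δJ/δu^α, with I = ∫G dx, J = ∫H dx, gⁱ = uⁱfⁱ, under the assumption that hᵢ depends only on u and uⁱ_x. -/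
/-- The variational derivative `δ(∫F dx)/δu^k = ∂F/∂u^k - ∂_x(∂F/∂u^k_x)` of a
density `F = F(u, u_x)` depending only on `u` and `u_x`, evaluated on the jet
`q = (u, u_x, u_xx)`; the total derivative `∂_x` of a function of `(u,u_x)` at
`(u,u_x)` is its differential applied in the direction `(u_x,u_xx)`. -/
noncomputable def eulOp (n : ℕ) (F : (Fin n → ℝ) × (Fin n → ℝ) → ℝ) (k : Fin n)
    (q : (Fin n → ℝ) × (Fin n → ℝ) × (Fin n → ℝ)) : ℝ :=
  fderiv ℝ F (q.1, q.2.1) ((Pi.single k 1 : Fin n → ℝ), (0 : Fin n → ℝ))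
    - fderiv ℝ
        (fun p : (Fin n → ℝ) × (Fin n → ℝ) =>
          fderiv ℝ F p ((0 : Fin n → ℝ), (Pi.single k 1 : Fin n → ℝ)))
        (q.1, q.2.1) (q.2.1, q.2.2)

/-- The `i`-th component of the bivector-derived vector field
`Xⁱ = gⁱ∂_x(δI/δuⁱ) + (1/2)(∂_xgⁱ)(δI/δuⁱ) + Σ_α B^{iα}δI/δu^α
      - fⁱ∂_x(δJ/δuⁱ) - (1/2)(∂_xfⁱ)(δJ/δuⁱ) - Σ_α A^{iα}δJ/δu^α`,
with `I = ∫G dx`, `J = ∫H dx`, `G = Σⱼ hⱼ(u,uʲ_x)`, `H = Σⱼ uʲhⱼ(u,uʲ_x)`,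
`gⁱ = uⁱfⁱ`, and the first-degree coefficients
`A^{ij} = (1/2)((fⁱ/fʲ)f^j_i uʲ_x - (fʲ/fⁱ)f^i_j uⁱ_x)`,
`B^{ij} = (1/2)((uⁱfⁱ/fʲ)f^j_i uʲ_x - (uʲfʲ/fⁱ)f^i_j uⁱ_x)`. -/
noncomputable def Xbiham (n : ℕ) (f : Fin n → (Fin n → ℝ) → ℝ)
    (h : Fin n → ((Fin n → ℝ) × ℝ) → ℝ) (i : Fin n)
    (u ux uxx uxxx : Fin n → ℝ) : ℝ :=
  let G : (Fin n → ℝ) × (Fin n → ℝ) → ℝ := fun p => ∑ j, h j (p.1, p.2 j)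
  let H : (Fin n → ℝ) × (Fin n → ℝ) → ℝ := fun p => ∑ j, p.1 j * h j (p.1, p.2 j)
  let A : Fin n → Fin n → ℝ := fun a b =>
    (1 / 2) * ((f a u / f b u) * fderiv ℝ (f b) u (Pi.single a 1) * ux b
      - (f b u / f a u) * fderiv ℝ (f a) u (Pi.single b 1) * ux a)
  let B : Fin n → Fin n → ℝ := fun a b =>
    (1 / 2) * ((u a * f a u / f b u) * fderiv ℝ (f b) u (Pi.single a 1) * ux b
      - (u b * f b u / f a u) * fderiv ℝ (f a) u (Pi.single b 1) * ux a)
  (u i * f i u) *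
      fderiv ℝ (fun q : (Fin n → ℝ) × (Fin n → ℝ) × (Fin n → ℝ) => eulOp n G i q)
        (u, ux, uxx) (ux, uxx, uxxx)
    + (1 / 2) * (fderiv ℝ (fun w : Fin n → ℝ => w i * f i w) u ux)
        * eulOp n G i (u, ux, uxx)
    + (∑ a, B i a * eulOp n G a (u, ux, uxx))
    - f i u *
        fderiv ℝ (fun q : (Fin n → ℝ) × (Fin n → ℝ) × (Fin n → ℝ) => eulOp n H i q)
          (u, ux, uxx) (ux, uxx, uxxx)
    - (1 / 2) * (fderiv ℝ (f i) u ux) * eulOp n H i (u, ux, uxx)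
    - ∑ a, A i a * eulOp n H a (u, ux, uxx)

/-!
Only the `u_xx`-dependence of `Xⁱ` matters. The variational derivative `δ/δuᵏ` of a density
`F(u, u_x)` is affine in `u_xx`, with `∂(δF/δuᵏ)/∂uⁱ_xx = -∂²F/∂uⁱ_x∂uᵏ_x`; for `G = Σ hⱼ` and
`H = Σ uʲhⱼ` these Hessians are diagonal, so the `A`- and `B`-sums contribute only through
`A^{ii} = B^{ii} = 0`. The third-order terms are removed by `∂H/∂uᵏ_x = uᵏ ∂G/∂uᵏ_x`, which gives
`δJ/δuⁱ = uⁱ δI/δuⁱ + K(u, u_x)` and hence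
`gⁱ∂_x(δI/δuⁱ) - fⁱ∂_x(δJ/δuⁱ) = -fⁱ(uⁱ_x δI/δuⁱ + ∂_x K)`. By symmetry of second derivatives
`∂K/∂uⁱ_x = -uⁱ_x hᵢ''`, so this pair contributes `2fⁱuⁱ_x hᵢ''`, and the two `1/2`-terms add
`-(1/2)fⁱuⁱ_x hᵢ''`.
-/

open ContinuousLinearMap

noncomputable section

lemma fderiv_mul_apply_of_hasFDerivAt {E : Type*} [NormedAddCommGroup E] [NormedSpace ℝ E]
    {c φ : E → ℝ} {ℓ : E →L[ℝ] ℝ} {p : E} (hc : HasFDerivAt c ℓ p)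
    (hφ : DifferentiableAt ℝ φ p) (v : E) :
    fderiv ℝ (fun p => c p * φ p) p v = ℓ v * φ p + c p * fderiv ℝ φ p v := by
  rw [fderiv_fun_mul hc.differentiableAt hφ, hc.fderiv]
  simp only [add_apply, FunLike.coe_smul, Pi.smul_apply, smul_eq_mul]
  ring

lemma contDiff_fderiv_apply_const {E : Type*} [NormedAddCommGroup E] [NormedSpace ℝ E]
    {m : WithTop ℕ∞} {F : E → ℝ} (hF : ContDiff ℝ (m + 1) F) (v : E) :
    ContDiff ℝ m (fun x => fderiv ℝ F x v) :=
  (hF.fderiv_right le_rfl).clm_apply contDiff_const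

lemma fderiv_fderiv_apply {E : Type*} [NormedAddCommGroup E] [NormedSpace ℝ E] {F : E → ℝ}
    {p : E} (hF : DifferentiableAt ℝ (fderiv ℝ F) p) (v w : E) :
    fderiv ℝ (fun p => fderiv ℝ F p v) p w = fderiv ℝ (fderiv ℝ F) p w v := by
  simp [fderiv_clm_apply hF (differentiableAt_const v)]

lemma deriv_comp_prodMk {E : Type*} [NormedAddCommGroup E] [NormedSpace ℝ E] {ψ : E × ℝ → ℝ}
    {a : E} {r : ℝ} (hψ : DifferentiableAt ℝ ψ (a, r)) :
    deriv (fun r => ψ (a, r)) r = fderiv ℝ ψ (a, r) (0, 1) :=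
  (hψ.hasFDerivAt.comp_hasDerivAt r ((hasDerivAt_const r a).prodMk (hasDerivAt_id r))).deriv

variable {n : ℕ}

local notation "V" => Fin n → ℝ

lemma hasDerivAt_clm_update {E : Type*} [NormedAddCommGroup E] [NormedSpace ℝ E]
    (L : E × V →L[ℝ] ℝ) (x : E) (y : V) (i : Fin n) :
    HasDerivAt (fun s => L (x, Function.update y i s)) (L (0, Pi.single i 1)) (y i) :=
  L.hasFDerivAt.comp_hasDerivAt _ ((hasDerivAt_const _ x).prodMk (hasDerivAt_update y i _))

def partialU (F : V × V → ℝ) (k : Fin n) (p : V × V) : ℝ :=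
  fderiv ℝ F p (Pi.single k 1, 0)

def partialUx (F : V × V → ℝ) (k : Fin n) (p : V × V) : ℝ :=
  fderiv ℝ F p (0, Pi.single k 1)

lemma hasFDerivAt_fst_apply (k : Fin n) (p : V × V) :
    HasFDerivAt (fun p : V × V => p.1 k) ((proj k).comp (fst ℝ V V)) p :=
  ((proj k).comp (fst ℝ V V)).hasFDerivAt

lemma partialUx_fst_mul {φ : V × V → ℝ} {p : V × V} (hφ : DifferentiableAt ℝ φ p) (j k : Fin n) :
    partialUx (fun p : V × V => p.1 j * φ p) k p = p.1 j * partialUx φ k p := by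
  rw [partialUx, fderiv_mul_apply_of_hasFDerivAt (hasFDerivAt_fst_apply j p) hφ]
  simp [partialUx]

lemma partialUx_sum {F : Fin n → V × V → ℝ} {p : V × V} (hF : ∀ j, DifferentiableAt ℝ (F j) p)
    (k : Fin n) : partialUx (fun p => ∑ j, F j p) k p = ∑ j, partialUx (F j) k p := by
  rw [partialUx, fderiv_fun_sum fun j _ => hF j, sum_apply]
  rfl

lemma hasFDerivAt_comp_coord {ψ : V × ℝ → ℝ} {p : V × V} (j : Fin n)
    (hψ : DifferentiableAt ℝ ψ (p.1, p.2 j)) :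
    HasFDerivAt (fun p : V × V => ψ (p.1, p.2 j))
      ((fderiv ℝ ψ (p.1, p.2 j)).comp ((fst ℝ V V).prod ((proj j).comp (snd ℝ V V)))) p :=
  hψ.hasFDerivAt.comp p ((fst ℝ V V).prod ((proj j).comp (snd ℝ V V))).hasFDerivAt

lemma partialUx_comp_coord {ψ : V × ℝ → ℝ} {p : V × V} (j : Fin n)
    (hψ : DifferentiableAt ℝ ψ (p.1, p.2 j)) (k : Fin n) :
    partialUx (fun p : V × V => ψ (p.1, p.2 j)) k p
      = (Pi.single k 1 : V) j * fderiv ℝ ψ (p.1, p.2 j) (0, 1) := by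
  rw [partialUx, (hasFDerivAt_comp_coord j hψ).fderiv, ← smul_eq_mul, ← map_smul]
  simp

lemma contDiff_partialU {m : WithTop ℕ∞} {F : V × V → ℝ} (hF : ContDiff ℝ (m + 1) F)
    (k : Fin n) : ContDiff ℝ m (partialU F k) :=
  contDiff_fderiv_apply_const hF _

lemma contDiff_partialUx {m : WithTop ℕ∞} {F : V × V → ℝ} (hF : ContDiff ℝ (m + 1) F)
    (k : Fin n) : ContDiff ℝ m (partialUx F k) :=
  contDiff_fderiv_apply_const hF _

lemma partialUx_partialU_comm {F : V × V → ℝ} {p : V × V} (hF : ContDiffAt ℝ 2 F p)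
    (j k : Fin n) : partialUx (partialU F k) j p = partialU (partialUx F j) k p := by
  have hF' : DifferentiableAt ℝ (fderiv ℝ F) p :=
    (hF.fderiv_right (m := 1) le_rfl).differentiableAt one_ne_zero
  change fderiv ℝ (fun p => fderiv ℝ F p _) p _ = fderiv ℝ (fun p => fderiv ℝ F p _) p _
  rw [fderiv_fderiv_apply hF', fderiv_fderiv_apply hF']
  exact hF.isSymmSndFDerivAt (by simp) _ _

lemma eulOp_eq (F : V × V → ℝ) (k : Fin n) (q : V × V × V) :
    eulOp n F k q
      = partialU F k (q.1, q.2.1) - fderiv ℝ (partialUx F k) (q.1, q.2.1) (q.2.1, q.2.2) :=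
  rfl

lemma hasDerivAt_eulOp_update (F : V × V → ℝ) (k i : Fin n) (u ux uxx : V) :
    HasDerivAt (fun s => eulOp n F k (u, ux, Function.update uxx i s))
      (-partialUx (partialUx F k) i (u, ux)) (uxx i) :=
  (hasDerivAt_clm_update (fderiv ℝ (partialUx F k) (u, ux)) ux uxx i).const_sub
    (partialU F k (u, ux))

lemma hasDerivAt_sum_mul_eulOp_update (F : V × V → ℝ) (c : Fin n → ℝ) (i : Fin n)
    (u ux uxx : V) (hF : ∀ a, a ≠ i → partialUx (partialUx F a) i (u, ux) = 0) :
    HasDerivAt (fun s => ∑ a, c a * eulOp n F a (u, ux, Function.update uxx i s))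
      (-(c i * partialUx (partialUx F i) i (u, ux))) (uxx i) := by
  have := HasDerivAt.fun_sum fun a (_ : a ∈ Finset.univ) =>
    (hasDerivAt_eulOp_update F a i u ux uxx).const_mul (c a)
  refine this.congr_deriv ?_
  rw [Finset.sum_eq_single i (fun a _ ha => by rw [hF a ha]; ring) (by simp)]
  ring

lemma contDiff_eulOp {m : WithTop ℕ∞} {F : V × V → ℝ} (hF : ContDiff ℝ (m + 1 + 1) F)
    (k : Fin n) : ContDiff ℝ m (eulOp n F k) := by
  have hU : ContDiff ℝ m (partialU F k) := contDiff_partialU (hF.of_le le_self_add) k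
  have hUx : ContDiff ℝ m (fderiv ℝ (partialUx F k)) :=
    (contDiff_partialUx hF k).fderiv_right le_rfl
  exact (hU.comp (by fun_prop)).sub ((hUx.comp (by fun_prop)).clm_apply (by fun_prop))

def eulOpDefect (G H : V × V → ℝ) (k : Fin n) (p : V × V) : ℝ :=
  partialU H k p - p.1 k * partialU G k p - p.2 k * partialUx G k p

variable {G H : (Fin n → ℝ) × (Fin n → ℝ) → ℝ} {k : Fin n}

lemma eulOp_eq_mul_add_eulOpDefect (hGH : ∀ p, partialUx H k p = p.1 k * partialUx G k p)
    (q : V × V × V) (hG : DifferentiableAt ℝ (partialUx G k) (q.1, q.2.1)) :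
    eulOp n H k q = q.1 k * eulOp n G k q + eulOpDefect G H k (q.1, q.2.1) := by
  rw [eulOp_eq, eulOp_eq, funext hGH,
    fderiv_mul_apply_of_hasFDerivAt (hasFDerivAt_fst_apply k _) hG, eulOpDefect]
  simp only [coe_comp, Function.comp_apply, coe_fst', proj_apply]
  ring

lemma fderiv_eulOp_eq_mul_add_eulOpDefect (hGH : ∀ p, partialUx H k p = p.1 k * partialUx G k p)
    (hG : Differentiable ℝ (partialUx G k)) {q : V × V × V}
    (hEG : DifferentiableAt ℝ (eulOp n G k) q)
    (hK : DifferentiableAt ℝ (eulOpDefect G H k) (q.1, q.2.1)) (v : V × V × V) :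
    fderiv ℝ (eulOp n H k) q v = v.1 k * eulOp n G k q + q.1 k * fderiv ℝ (eulOp n G k) q v
      + fderiv ℝ (eulOpDefect G H k) (q.1, q.2.1) (v.1, v.2.1) := by
  have hc : HasFDerivAt (fun q : V × V × V => q.1 k) ((proj k).comp (fst ℝ V (V × V))) q :=
    ((proj k).comp (fst ℝ V (V × V))).hasFDerivAt
  have hπ : HasFDerivAt (fun q : V × V × V => (q.1, q.2.1))
      ((fst ℝ V (V × V)).prod ((fst ℝ V V).comp (snd ℝ V (V × V)))) q :=
    ((fst ℝ V (V × V)).prod ((fst ℝ V V).comp (snd ℝ V (V × V)))).hasFDerivAt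
  have hsum : HasFDerivAt (fun q => q.1 k * eulOp n G k q + eulOpDefect G H k (q.1, q.2.1)) _ q :=
    (hc.mul hEG.hasFDerivAt).add (hK.hasFDerivAt.comp q hπ :)
  rw [funext fun q => eulOp_eq_mul_add_eulOpDefect hGH q (hG _), hsum.fderiv]
  simp only [add_apply, smul_apply, smul_eq_mul, comp_apply, coe_fst', proj_apply, prod_apply,
    coe_snd']
  ring

lemma contDiff_eulOpDefect {m : WithTop ℕ∞} (hG : ContDiff ℝ (m + 1) G)
    (hH : ContDiff ℝ (m + 1) H) (k : Fin n) : ContDiff ℝ m (eulOpDefect G H k) := by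
  have := contDiff_partialU hH k
  have := contDiff_partialU hG k
  have := contDiff_partialUx hG k
  unfold eulOpDefect
  fun_prop

lemma partialUx_eulOpDefect (hGH : ∀ p, partialUx H k p = p.1 k * partialUx G k p)
    (hG : ContDiff ℝ 2 G) (hH : ContDiff ℝ 2 H) (p : V × V) :
    partialUx (eulOpDefect G H k) k p = -(p.2 k * partialUx (partialUx G k) k p) := by
  have hUH := (contDiff_partialU (m := 1) hH k).differentiable one_ne_zero p
  have hUG := (contDiff_partialU (m := 1) hG k).differentiable one_ne_zero p
  have hUxG := (contDiff_partialUx (m := 1) hG k).differentiable one_ne_zero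
  have h1 := hasFDerivAt_fst_apply k p
  have h2 : HasFDerivAt (fun p : V × V => p.2 k) ((proj k).comp (snd ℝ V V)) p :=
    ((proj k).comp (snd ℝ V V)).hasFDerivAt
  have hH' : partialUx (partialU H k) k p
      = partialUx G k p + p.1 k * partialUx (partialU G k) k p := by
    rw [partialUx_partialU_comm hH.contDiffAt, partialUx_partialU_comm hG.contDiffAt, partialU,
      funext hGH, fderiv_mul_apply_of_hasFDerivAt h1 (hUxG p)]
    simp [partialU]
  have hfun : eulOpDefect G H k
      = fun p => partialU H k p - p.1 k * partialU G k p - p.2 k * partialUx G k p := rfl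
  have hsum : HasFDerivAt
      (fun p => partialU H k p - p.1 k * partialU G k p - p.2 k * partialUx G k p) _ p :=
    (hUH.hasFDerivAt.sub (h1.mul hUG.hasFDerivAt)).sub (h2.mul (hUxG p).hasFDerivAt)
  rw [partialUx, hfun, hsum.fderiv]
  change partialUx (partialU H k) k p - _ - _ = _
  rw [hH']
  simp [partialUx]

lemma mul_fderiv_eulOp_sub_fderiv_eulOp (hGH : ∀ p, partialUx H k p = p.1 k * partialUx G k p)
    (hG : ContDiff ℝ 3 G) (hH : ContDiff ℝ 2 H) (u ux uxx uxxx : V) :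
    u k * fderiv ℝ (eulOp n G k) (u, ux, uxx) (ux, uxx, uxxx)
        - fderiv ℝ (eulOp n H k) (u, ux, uxx) (ux, uxx, uxxx)
      = -(ux k * eulOp n G k (u, ux, uxx) + fderiv ℝ (eulOpDefect G H k) (u, ux) (ux, uxx)) := by
  have hUxG := (contDiff_partialUx (m := 1) (hG.of_le (by norm_num)) k).differentiable one_ne_zero
  have hEG := (contDiff_eulOp (m := 1) hG k).differentiable one_ne_zero
  have hK := (contDiff_eulOpDefect (m := 1) (hG.of_le (by norm_num)) hH k).differentiable
    one_ne_zero
  rw [fderiv_eulOp_eq_mul_add_eulOpDefect hGH hUxG (hEG _) (hK _)]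
  ring

def coeffA (f : Fin n → V → ℝ) (u ux : V) (a b : Fin n) : ℝ :=
  (1 / 2) * ((f a u / f b u) * fderiv ℝ (f b) u (Pi.single a 1) * ux b
    - (f b u / f a u) * fderiv ℝ (f a) u (Pi.single b 1) * ux a)

def coeffB (f : Fin n → V → ℝ) (u ux : V) (a b : Fin n) : ℝ :=
  (1 / 2) * ((u a * f a u / f b u) * fderiv ℝ (f b) u (Pi.single a 1) * ux b
    - (u b * f b u / f a u) * fderiv ℝ (f a) u (Pi.single b 1) * ux a)

lemma coeffA_self (f : Fin n → V → ℝ) (u ux : V) (a : Fin n) : coeffA f u ux a a = 0 := by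
  simp [coeffA]

lemma coeffB_self (f : Fin n → V → ℝ) (u ux : V) (a : Fin n) : coeffB f u ux a a = 0 := by
  simp [coeffB]

def biHamField (f : Fin n → V → ℝ) (G H : V × V → ℝ) (i : Fin n) (u ux uxx uxxx : V) : ℝ :=
  (u i * f i u) * fderiv ℝ (eulOp n G i) (u, ux, uxx) (ux, uxx, uxxx)
    + (1 / 2) * (fderiv ℝ (fun w : V => w i * f i w) u ux) * eulOp n G i (u, ux, uxx)
    + (∑ a, coeffB f u ux i a * eulOp n G a (u, ux, uxx))
    - f i u * fderiv ℝ (eulOp n H i) (u, ux, uxx) (ux, uxx, uxxx)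
    - (1 / 2) * (fderiv ℝ (f i) u ux) * eulOp n H i (u, ux, uxx)
    - ∑ a, coeffA f u ux i a * eulOp n H a (u, ux, uxx)

theorem hasDerivAt_biHamField_update (f : Fin n → V → ℝ) (i : Fin n) {u : V}
    (hf : DifferentiableAt ℝ (f i) u) (hG : ContDiff ℝ 3 G) (hH : ContDiff ℝ 2 H)
    (hGH : ∀ k p, partialUx H k p = p.1 k * partialUx G k p) (ux uxx uxxx : V)
    (hdiag : ∀ a, a ≠ i → partialUx (partialUx G a) i (u, ux) = 0) :
    HasDerivAt (fun s => biHamField f G H i u ux (Function.update uxx i s) uxxx)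
      ((3 / 2) * f i u * ux i * partialUx (partialUx G i) i (u, ux)) (uxx i) := by
  have hw : HasFDerivAt (fun w : V => w i) (proj i) u := hasFDerivAt_apply (𝕜 := ℝ) i u
  have hX : ∀ s, biHamField f G H i u ux (Function.update uxx i s) uxxx
      = -(f i u * (ux i * eulOp n G i (u, ux, Function.update uxx i s)
          + fderiv ℝ (eulOpDefect G H i) (u, ux) (ux, Function.update uxx i s)))
        + (1 / 2) * (ux i * f i u + u i * fderiv ℝ (f i) u ux)
          * eulOp n G i (u, ux, Function.update uxx i s)
        + ∑ a, coeffB f u ux i a * eulOp n G a (u, ux, Function.update uxx i s)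
        - (1 / 2) * fderiv ℝ (f i) u ux * eulOp n H i (u, ux, Function.update uxx i s)
        - ∑ a, coeffA f u ux i a * eulOp n H a (u, ux, Function.update uxx i s) := fun s => by
    rw [biHamField, fderiv_mul_apply_of_hasFDerivAt hw hf, proj_apply]
    linear_combination f i u * mul_fderiv_eulOp_sub_fderiv_eulOp (hGH i) hG hH u ux
      (Function.update uxx i s) uxxx
  have hUxG : ∀ k, Differentiable ℝ (partialUx G k) := fun k =>
    (contDiff_partialUx (m := 1) (hG.of_le (by norm_num)) k).differentiable one_ne_zero
  have hHess : ∀ a j, partialUx (partialUx H a) j (u, ux)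
      = u a * partialUx (partialUx G a) j (u, ux) := fun a j =>
    funext (hGH a) ▸ partialUx_fst_mul (hUxG a _) a j
  have dEG := hasDerivAt_eulOp_update G i i u ux uxx
  have dEH := hasDerivAt_eulOp_update H i i u ux uxx
  have dK := hasDerivAt_clm_update (fderiv ℝ (eulOpDefect G H i) (u, ux)) ux uxx i
  have dB := hasDerivAt_sum_mul_eulOp_update G (coeffB f u ux i) i u ux uxx hdiag
  have dA := hasDerivAt_sum_mul_eulOp_update H (coeffA f u ux i) i u ux uxx
    fun a ha => by rw [hHess, hdiag a ha, mul_zero]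
  rw [funext hX]
  refine ((((((dEG.const_mul (ux i)).add dK).const_mul (f i u)).neg.add
    (dEG.const_mul _)).add dB).sub (dEH.const_mul _) |>.sub dA).congr_deriv ?_
  rw [← partialUx, partialUx_eulOpDefect (hGH i) (hG.of_le (by norm_num)) hH, hHess, coeffA_self,
    coeffB_self]
  ring

def densityG (h : Fin n → V × ℝ → ℝ) : V × V → ℝ := fun p => ∑ j, h j (p.1, p.2 j)

def densityH (h : Fin n → V × ℝ → ℝ) : V × V → ℝ := fun p => ∑ j, p.1 j * h j (p.1, p.2 j)

lemma Xbiham_eq_biHamField (f : Fin n → V → ℝ) (h : Fin n → V × ℝ → ℝ) :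
    Xbiham n f h = biHamField f (densityG h) (densityH h) :=
  rfl

variable {h : Fin n → (Fin n → ℝ) × ℝ → ℝ}

lemma contDiff_densityG {m : WithTop ℕ∞} (hh : ∀ j, ContDiff ℝ m (h j)) :
    ContDiff ℝ m (densityG h) := by
  unfold densityG
  fun_prop

lemma contDiff_densityH {m : WithTop ℕ∞} (hh : ∀ j, ContDiff ℝ m (h j)) :
    ContDiff ℝ m (densityH h) := by
  unfold densityH
  fun_prop

lemma partialUx_densityG (hh : ∀ j, Differentiable ℝ (h j)) (k : Fin n) (p : V × V) :
    partialUx (densityG h) k p = fderiv ℝ (h k) (p.1, p.2 k) (0, 1) := by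
  unfold densityG
  rw [partialUx_sum fun j => (hasFDerivAt_comp_coord j (hh j _)).differentiableAt]
  simp [partialUx_comp_coord _ (hh _ _), Pi.single_apply]

lemma partialUx_densityH (hh : ∀ j, Differentiable ℝ (h j)) (k : Fin n) (p : V × V) :
    partialUx (densityH h) k p = p.1 k * partialUx (densityG h) k p := by
  have hd : ∀ j, DifferentiableAt ℝ (fun p : V × V => h j (p.1, p.2 j)) p :=
    fun j => (hasFDerivAt_comp_coord j (hh j _)).differentiableAt
  unfold densityH
  rw [partialUx_sum (F := fun j p => p.1 j * h j (p.1, p.2 j))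
      fun j => (hasFDerivAt_fst_apply j p).differentiableAt.mul (hd j),
    partialUx_densityG hh]
  simp [partialUx_fst_mul (hd _), partialUx_comp_coord _ (hh _ _), Pi.single_apply]

lemma partialUx_partialUx_densityG (hh : ∀ j, ContDiff ℝ 2 (h j)) (a i : Fin n) (p : V × V) :
    partialUx (partialUx (densityG h) a) i p
      = (Pi.single i 1 : V) a
        * fderiv ℝ (fun x => fderiv ℝ (h a) x (0, 1)) (p.1, p.2 a) (0, 1) := by
  have hR : Differentiable ℝ (fun x => fderiv ℝ (h a) x (0, 1)) :=
    (contDiff_fderiv_apply_const (m := 1) (hh a) _).differentiable one_ne_zero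
  rw [funext (partialUx_densityG (fun j => (hh j).differentiable two_ne_zero) a)]
  exact partialUx_comp_coord a (hR _) i

end

theorem coefficient_of_uxx_in_Xbiham_general (n : ℕ)
    (f : Fin n → (Fin n → ℝ) → ℝ) (h : Fin n → ((Fin n → ℝ) × ℝ) → ℝ)
    (hf : ∀ i, ContDiff ℝ (⊤ : ℕ∞) (f i))
    (hh : ∀ i, ContDiff ℝ (⊤ : ℕ∞) (h i))
    (i : Fin n) (u ux uxx uxxx : Fin n → ℝ) :
    deriv (fun s => Xbiham n f h i u ux (Function.update uxx i s) uxxx) (uxx i) =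
      (3 / 2) * f i u * ux i *
        deriv (fun s => deriv (fun r => h i (u, r)) s) (ux i) := by
  have hh3 : ∀ j, ContDiff ℝ 3 (h j) := fun j => (hh j).of_le (by norm_cast)
  have hh2 : ∀ j, ContDiff ℝ 2 (h j) := fun j => (hh3 j).of_le (by norm_num)
  have hHess := partialUx_partialUx_densityG hh2
  have hX := hasDerivAt_biHamField_update f i ((hf i).differentiable (by simp) u)
    (contDiff_densityG hh3) (contDiff_densityH hh2)
    (partialUx_densityH fun j => (hh j).differentiable (by simp)) ux uxx uxxx
    fun a ha => by rw [hHess, Pi.single_eq_of_ne ha, zero_mul]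
  rw [Xbiham_eq_biHamField, hX.deriv, hHess, Pi.single_eq_same, one_mul,
    funext fun s => deriv_comp_prodMk ((hh i).differentiable (by simp) (u, s)),
    deriv_comp_prodMk
      ((contDiff_fderiv_apply_const (m := 1) (hh2 i) _).differentiable one_ne_zero _)]

/-- For densities `G = Σᵢ hᵢ(u,uⁱ_x)` and `H = Σᵢ uⁱhᵢ(u,uⁱ_x)` with `hᵢ` depending
only on `u` and `uⁱ_x`, the components of `X` satisfy
`∂Xⁱ/∂uⁱ_xx = (3/2)fⁱ uⁱ_x ∂²hᵢ/∂(uⁱ_x)²`. -/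
theorem coefficient_of_uxx_in_Xbiham (n : ℕ)
    (f : Fin n → (Fin n → ℝ) → ℝ) (h : Fin n → ((Fin n → ℝ) × ℝ) → ℝ)
    (hf : ∀ i, ContDiff ℝ (⊤ : ℕ∞) (f i))
    (hfne : ∀ i u, f i u ≠ 0)
    (hh : ∀ i, ContDiff ℝ (⊤ : ℕ∞) (h i))
    (i : Fin n) (u ux uxx uxxx : Fin n → ℝ) :
    deriv (fun s => Xbiham n f h i u ux (Function.update uxx i s) uxxx) (uxx i) =
      (3 / 2) * f i u * ux i *
        deriv (fun s => deriv (fun r => h i (u, r)) s) (ux i) :=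
  coefficient_of_uxx_in_Xbiham_general n f h hf hh i u ux uxx uxxx
end
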